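/- arXiv:1907.10116 — 5 statements merged into one kernel-verified Lean document; each statement's English description precedes it below -/
import Mathlib

section
/- Let d ≥ 2, m ≥ 2 be integers and define g_m(x) = cot(π(x + 1/(2m))/d). Define α_n = (1/(2d)) tan(π/(2m)) [g_m(n) - g_m(⌊d/2⌋)] and β_n = (1/(2d)) tan(π/(2m)) [g_m(n+1-1/m) + g_m(⌊d/2⌋)] for n = 0,…,⌊d/2⌋-1. Then the sum S = Σ_{n=0}^{⌊d/2⌋-1} (α_n - β_n) equals (1/2){1 - tan(π/(2m))·cot[(π/d)(⌊d/2⌋ + 1/(2m))]}. -/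
/-!
The cotangent multiplication formula `∑_{k<d} cot (z + kπ/d) = d cot (d z)`, applied at
`z = π/(2md)`, gives `∑_{k<d} g_m(k) = d cot (π/(2m))`. Since `cot (π - x) = -cot x`, the
shifted values `g_m(n + 1 - 1/m)` are `-g_m(d - 1 - n)`, so the sum `S` pairs `g_m(n)` with
`g_m(d - 1 - n)`. These pairs, together with the middle term when `d` is odd, make up all of
`∑_{k<d} g_m(k)`, and the `⌊d/2⌋`-fold copies of `g_m(⌊d/2⌋)` combine to `d g_m(⌊d/2⌋)`.

The multiplication formula comes from writing `cot t = i - 2i / (1 - e^{2it})` and summing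
`1 / (1 - ζ^k w) = (∑_{j<d} (ζ^k w)^j) / (1 - w^d)` over the `d`-th roots of unity `ζ^k`.
-/

open Finset Real

theorem IsPrimitiveRoot.sum_inv_one_sub_pow_mul {K : Type*} [Field K] {ζ : K} {d : ℕ}
    (hζ : IsPrimitiveRoot ζ d) {w : K} (hw : w ^ d ≠ 1) :
    ∑ k ∈ range d, (1 - ζ ^ k * w)⁻¹ = d / (1 - w ^ d) := by
  have hwd : 1 - w ^ d ≠ 0 := sub_ne_zero.mpr hw.symm
  have hpow (k : ℕ) : (ζ ^ k * w) ^ d = w ^ d := by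
    rw [mul_pow, ← pow_mul, pow_mul', hζ.pow_eq_one, one_pow, one_mul]
  have hterm (k : ℕ) :
      (1 - ζ ^ k * w)⁻¹ = (∑ j ∈ range d, w ^ j * (ζ ^ j) ^ k) / (1 - w ^ d) := by
    have hgeom := mul_neg_geom_sum (ζ ^ k * w) d
    rw [hpow] at hgeom
    have hne : 1 - ζ ^ k * w ≠ 0 := fun h ↦ hwd (by rw [← hgeom, h, zero_mul])
    rw [eq_div_iff hwd, ← hgeom, ← mul_assoc, inv_mul_cancel₀ hne, one_mul]
    exact sum_congr rfl fun j _ ↦ by ring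
  have hroots (j : ℕ) (hj : j ∈ range d) (hj0 : j ≠ 0) : ∑ k ∈ range d, (ζ ^ j) ^ k = 0 := by
    have hne : ζ ^ j ≠ 1 := hζ.pow_ne_one_of_pos_of_lt hj0 (mem_range.mp hj)
    rw [geom_sum_eq hne, ← pow_mul, pow_mul', hζ.pow_eq_one, one_pow, sub_self, zero_div]
  simp_rw [hterm, ← sum_div]
  rw [sum_comm]
  simp_rw [← mul_sum]
  rw [sum_eq_single 0 (fun j hj hj0 ↦ by rw [hroots j hj hj0, mul_zero])]
  · simp
  · intro h0
    rw [mem_range, not_lt, Nat.le_zero] at h0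
    simp [h0] at hw

theorem Complex.exp_two_mul_I_mul_ne_one {t : ℂ} (h : sin t ≠ 0) : exp (2 * I * t) ≠ 1 := by
  rw [Ne, exp_eq_one_iff]
  rintro ⟨n, hn⟩
  apply h
  rw [show t = n * π by
    have := I_ne_zero
    field_simp at hn ⊢
    linear_combination hn]
  exact sin_int_mul_pi n

theorem Complex.cot_eq_I_sub_inv {t : ℂ} (h : exp (2 * I * t) ≠ 1) :
    cot t = I - 2 * I * (1 - exp (2 * I * t))⁻¹ := by
  have : 1 - exp (2 * I * t) ≠ 0 := sub_ne_zero.mpr h.symm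
  rw [cot_eq_exp_ratio]
  field_simp
  linear_combination (1 + exp (2 * I * t)) * I_sq

theorem Complex.sum_cot_add_mul_pi_div {d : ℕ} {z : ℂ} (h : sin (d * z) ≠ 0) :
    ∑ k ∈ range d, cot (z + k * π / d) = d * cot (d * z) := by
  have hdz := exp_two_mul_I_mul_ne_one h
  have hd : d ≠ 0 := by rintro rfl; simp at h
  have hζ := isPrimitiveRoot_exp d hd
  set w := exp (2 * I * z)
  have hw : w ^ d = exp (2 * I * (d * z)) := by
    rw [← exp_nat_mul]; ring_nf
  have hζw (k : ℕ) : exp (2 * π * I / d) ^ k * w = exp (2 * I * (z + k * π / d)) := by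
    rw [← exp_nat_mul, ← exp_add]
    congr 1
    field_simp
    ring
  have hk (k : ℕ) : exp (2 * I * (z + k * π / d)) ≠ 1 := by
    rw [← hζw]
    intro h1
    apply hdz
    rw [← hw, ← one_pow d, ← h1, mul_pow, ← pow_mul, pow_mul', hζ.pow_eq_one, one_pow, one_mul]
  simp_rw [cot_eq_I_sub_inv (hk _), ← hζw, cot_eq_I_sub_inv hdz, ← hw]
  rw [sum_sub_distrib, ← mul_sum, hζ.sum_inv_one_sub_pow_mul (hw ▸ hdz)]
  simp
  ring

theorem Finset.sum_range_div_two_add_reflect {M : Type*} [AddCommMonoid M] (f : ℕ → M) (d : ℕ) :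
    ∑ n ∈ range (d / 2), (f n + f (d - 1 - n)) + (d % 2) • f (d / 2) = ∑ n ∈ range d, f n := by
  induction d using Nat.twoStepInduction generalizing f with
  | zero => simp
  | one => simp
  | more d ih _ =>
    have hreflect : ∀ n ∈ range (d / 2), f (n + 1) + f (d + 2 - 1 - (n + 1))
        = f (n + 1) + f (d - 1 - n + 1) := fun n hn ↦ by
      rw [mem_range] at hn
      congr 2
      omega
    rw [show (d + 2) / 2 = d / 2 + 1 by omega, Nat.add_mod_right, sum_range_succ',
      sum_congr rfl hreflect, sum_range_succ, sum_range_succ', ← ih (f ·.succ)]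
    simp only [Nat.succ_eq_add_one]
    ac_rfl

theorem Real.cot_pi_sub (x : ℝ) : cot (π - x) = -cot x := by
  rw [cot_eq_cos_div_sin, cot_eq_cos_div_sin, cos_pi_sub, sin_pi_sub, neg_div]

theorem Real.tan_mul_cot {x : ℝ} (h : tan x ≠ 0) : tan x * cot x = 1 := by
  rw [← cot_inv_eq_tan] at h ⊢
  exact inv_mul_cancel₀ fun h0 ↦ h (by rw [h0, inv_zero])

theorem Real.sum_cot_add_mul_pi_div {d : ℕ} {z : ℝ} (h : sin (d * z) ≠ 0) :
    ∑ k ∈ range d, cot (z + k * π / d) = d * cot (d * z) := by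
  have h' : Complex.sin (d * z) ≠ 0 := by exact_mod_cast h
  exact_mod_cast Complex.sum_cot_add_mul_pi_div h'

theorem Real.sum_cot_pi_mul_add_div {d : ℕ} {c : ℝ} (hd : (d : ℝ) ≠ 0) (h : sin (π * c) ≠ 0) :
    ∑ k ∈ range d, cot (π * (k + c) / d) = d * cot (π * c) := by
  have hdz : d * (π * c / d) = π * c := by field_simp
  rw [← hdz, ← sum_cot_add_mul_pi_div (by rwa [hdz])]
  exact sum_congr rfl fun k _ ↦ by ring_nf

theorem stmt1 (d m : ℕ) (hd : 2 ≤ d) (hm : 2 ≤ m)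
    (g : ℝ → ℝ) (hg : ∀ x : ℝ, g x = Real.cot (Real.pi * (x + 1 / (2 * m)) / d))
    (α β : ℕ → ℝ)
    (hα : ∀ n : ℕ, α n = 1 / (2 * d) * Real.tan (Real.pi / (2 * m))
      * (g n - g ((d / 2 : ℕ) : ℝ)))
    (hβ : ∀ n : ℕ, β n = 1 / (2 * d) * Real.tan (Real.pi / (2 * m))
      * (g ((n : ℝ) + 1 - 1 / m) + g ((d / 2 : ℕ) : ℝ))) :
    ∑ n ∈ Finset.range (d / 2), (α n - β n)
      = 1 / 2 * (1 - Real.tan (Real.pi / (2 * m))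
          * Real.cot (Real.pi / d * (((d / 2 : ℕ) : ℝ) + 1 / (2 * m)))) := by
  have hd0 : (d : ℝ) ≠ 0 := by positivity
  have hm2 : (2 : ℝ) ≤ m := by exact_mod_cast hm
  have hθ : 0 < π / (2 * m) ∧ π / (2 * m) < π / 2 :=
    ⟨by positivity, div_lt_div_of_pos_left pi_pos two_pos (by linarith)⟩
  have htan_cot := tan_mul_cot (tan_pos_of_pos_of_lt_pi_div_two hθ.1 hθ.2).ne'
  have hsum_g : ∑ k ∈ range d, g k = d * cot (π / (2 * m)) := by
    have hsin := (sin_pos_of_pos_of_lt_pi hθ.1 (by linarith)).ne'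
    rw [← mul_one_div] at hsin ⊢
    simp_rw [hg]
    exact sum_cot_pi_mul_add_div hd0 hsin
  have hreflect : ∀ n ∈ range (d / 2), g (n + 1 - 1 / m) = -g ↑(d - 1 - n) := by
    intro n hn
    have hn : n + 1 ≤ d := by rw [mem_range] at hn; omega
    rw [hg, hg, ← cot_pi_sub, show d - 1 - n = d - (n + 1) by omega, Nat.cast_sub hn]
    congr 1
    field_simp
    push_cast
    ring
  have hcot_g : cot (π / d * ((d / 2 : ℕ) + 1 / (2 * m))) = g (d / 2 : ℕ) := by
    rw [hg]; ring_nf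
  have hd_split : (d : ℝ) = (d % 2 : ℕ) + 2 * (d / 2 : ℕ) := by
    exact_mod_cast (Nat.mod_add_div d 2).symm
  calc ∑ n ∈ range (d / 2), (α n - β n)
      = ∑ n ∈ range (d / 2), (tan (π / (2 * m)) / (2 * d) * (g n + g ↑(d - 1 - n))
          - tan (π / (2 * m)) / d * g (d / 2 : ℕ)) :=
        sum_congr rfl fun n hn ↦ by rw [hα, hβ, hreflect n hn]; ring
    _ = tan (π / (2 * m)) / (2 * d) * (∑ n ∈ range (d / 2), (g n + g ↑(d - 1 - n))
          - 2 * (d / 2 : ℕ) * g (d / 2 : ℕ)) := by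
        rw [sum_sub_distrib, sum_const, card_range, nsmul_eq_mul, ← mul_sum]
        ring
    _ = tan (π / (2 * m)) / (2 * d) * (∑ n ∈ range d, g n - d * g (d / 2 : ℕ)) := by
        rw [← sum_range_div_two_add_reflect (fun n : ℕ ↦ g n) d, hd_split, nsmul_eq_mul]
        ring
    _ = _ := by
        rw [hsum_g, hcot_g]
        field_simp
        linear_combination htan_cot
end

section
/- Let d be an odd integer ≥ 3, m ≥ 2, ω = exp(2πi/d), and define α_n, β_n for n = 0,…,(d-1)/2 - 1 by α_n = (1/(2d)) tan(π/(2m)) [g_m(n) - g_m((d-1)/2)] and β_n = (1/(2d)) tan(π/(2m)) [g_m(n+1-1/m) + g_m((d-1)/2)], where g_m(x) = cot(π(x+1/(2m))/d). Then for every integer k with 1 ≤ k ≤ (d-1)/2, Σ_{n=0}^{(d-1)/2-1} (α_n ω^{-kn} - β_n ω^{k(n+1)}) = exp(πi(2k-d)/(2md)) / (2cos(π/(2m))). -/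
/-!
Write `ω = exp (2πi/d)`, `d = 2N + 1` and `c = tan (π/(2m)) / (2d)`. Since `cot (π - x) = -cot x`
and `ω ^ d = 1`, the `β`-term of index `n` is the `α`-type term `(g j - g N) ω^(-kj)` at the
reflected index `j = 2N - n`, so the sum equals `c ∑_{j<d} (g j - g N) ω^(-kj)`, and the constant
`g N` drops out because `∑_j ω^(-kj) = 0`. For the remaining Fourier coefficient of the shifted
cotangent write `cot t = i (x + 1) / (x - 1)` with `x = exp (2it) = q ω^j`, `q = exp (πi/(md))`,
and expand `(x + 1) / (x - 1) = 1 + 2 ∑_{l<d} x^l / (q^d - 1)`; orthogonality of the characters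
`j ↦ ω^((l-k)j)` keeps only `l = k`, giving
`2di q^k / (q^d - 1) = d exp (πi(2k - d)/(2md)) / sin (π/(2m))`.
-/

open Complex Finset

lemma geom_sum_range_eq_zero_of_pow_eq_one {K : Type*} [Field K] {z : K} {d : ℕ}
    (hz : z ^ d = 1) (hz1 : z ≠ 1) : ∑ n ∈ range d, z ^ n = 0 := by
  rw [geom_sum_eq hz1, hz, sub_self, zero_div]

lemma IsPrimitiveRoot.sum_range_pow_mul_inv_pow {K : Type*} [Field K] {ω : K} {d j k : ℕ}
    (hω : IsPrimitiveRoot ω d) (hj : j < d) (hk : k < d) :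
    ∑ n ∈ range d, (ω ^ j * (ω ^ k)⁻¹) ^ n = if j = k then (d : K) else 0 := by
  have hω0 : ω ≠ 0 := hω.ne_zero (by omega)
  split_ifs with hjk
  · simp [hjk, hω0]
  · refine geom_sum_range_eq_zero_of_pow_eq_one ?_ ?_
    · rw [mul_pow, inv_pow, ← pow_mul, ← pow_mul, mul_comm j, mul_comm k, pow_mul, pow_mul,
        hω.pow_eq_one, one_pow, one_pow, inv_one, mul_one]
    · rw [Ne, mul_inv_eq_one₀ (pow_ne_zero _ hω0)]
      exact fun h => hjk (hω.pow_inj hj hk h)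

lemma add_one_div_sub_one_eq_geom_sum {K : Type*} [Field K] {x : K} {d : ℕ}
    (hx : x ^ d ≠ 1) :
    (x + 1) / (x - 1) = 1 + 2 / (x ^ d - 1) * ∑ j ∈ range d, x ^ j := by
  have hx1 : x - 1 ≠ 0 := sub_ne_zero.mpr fun h => hx (by rw [h, one_pow])
  have hxd : x ^ d - 1 ≠ 0 := sub_ne_zero.mpr hx
  rw [geom_sum_eq (sub_ne_zero.mp hx1)]
  field_simp
  ring

lemma IsPrimitiveRoot.sum_range_add_one_div_sub_one_mul_inv_pow {K : Type*} [Field K]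
    {ω q : K} {d k : ℕ} (hω : IsPrimitiveRoot ω d) (hq : q ^ d ≠ 1) (hk0 : 0 < k)
    (hkd : k < d) :
    ∑ n ∈ range d, (q * ω ^ n + 1) / (q * ω ^ n - 1) * (ω ^ k)⁻¹ ^ n
      = 2 * d * q ^ k / (q ^ d - 1) := by
  have hpow : ∀ n, (q * ω ^ n) ^ d = q ^ d := fun n => by
    rw [mul_pow, ← pow_mul, mul_comm n, pow_mul, hω.pow_eq_one, one_pow, mul_one]
  -- the leading `1` of the expansion is kept as the `j = 0` character
  have hsummand : ∀ n, (q * ω ^ n + 1) / (q * ω ^ n - 1) * (ω ^ k)⁻¹ ^ n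
      = (ω ^ 0 * (ω ^ k)⁻¹) ^ n
        + 2 / (q ^ d - 1) * ∑ j ∈ range d, q ^ j * (ω ^ j * (ω ^ k)⁻¹) ^ n := fun n => by
    have hterm : ∀ j, (q * ω ^ n) ^ j * (ω ^ k)⁻¹ ^ n = q ^ j * (ω ^ j * (ω ^ k)⁻¹) ^ n := by
      intro j
      rw [mul_pow, mul_pow, ← pow_mul, ← pow_mul, mul_comm j n]
      ring
    rw [add_one_div_sub_one_eq_geom_sum (by rwa [hpow]), hpow, add_mul, one_mul, pow_zero,
      one_mul, mul_assoc, sum_mul]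
    simp only [hterm]
  rw [sum_congr rfl fun n _ => hsummand n, sum_add_distrib, ← mul_sum, sum_comm,
    hω.sum_range_pow_mul_inv_pow (by omega) hkd, if_neg hk0.ne]
  simp only [← mul_sum]
  rw [sum_congr rfl fun j hj => by rw [hω.sum_range_pow_mul_inv_pow (mem_range.mp hj) hkd]]
  simp only [mul_ite, mul_zero, sum_ite_eq', mem_range, if_pos hkd, zero_add]
  ring

lemma sum_range_add_reflect {M : Type*} [AddCommMonoid M] (F : ℕ → M) (N : ℕ) :
    ∑ n ∈ range N, (F n + F (2 * N - n)) + F N = ∑ j ∈ range (2 * N + 1), F j := by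
  rw [show 2 * N + 1 = (N + 1) + N by ring, sum_range_add, sum_range_succ, sum_add_distrib,
    ← sum_range_reflect (fun j => F (N + 1 + j)) N, add_right_comm]
  congr 1
  refine sum_congr rfl fun n hn => ?_
  rw [mem_range] at hn
  congr 1
  omega

lemma sum_range_sub_mul_pow_add_reflect {K : Type*} [Field K] {ζ : K} {N : ℕ}
    (hζ : ζ ^ (2 * N + 1) = 1) (hζ1 : ζ ≠ 1) (G : ℕ → K) :
    ∑ n ∈ range N, ((G n - G N) * ζ ^ n + (G (2 * N - n) - G N) * ζ ^ (2 * N - n))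
      = ∑ j ∈ range (2 * N + 1), G j * ζ ^ j := by
  have hfold := sum_range_add_reflect (fun j => (G j - G N) * ζ ^ j) N
  rw [sub_self, zero_mul, add_zero] at hfold
  rw [hfold]
  simp only [sub_mul, sum_sub_distrib, ← mul_sum, geom_sum_range_eq_zero_of_pow_eq_one hζ hζ1,
    mul_zero, sub_zero]

lemma inv_pow_eq_pow_of_add_eq {G : Type*} [DivisionMonoid G] {ζ : G} {d i j : ℕ}
    (hζ : ζ ^ d = 1) (hij : i + j = d) : (ζ ^ i)⁻¹ = ζ ^ j :=
  (eq_inv_of_mul_eq_one_left (by rw [← pow_add, add_comm, hij, hζ])).symm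

lemma exp_neg_two_pi_I_mul_div_eq_inv_pow (d k x : ℕ) :
    exp (2 * Real.pi * I * (-((k : ℝ) * x)) / d)
      = ((exp (2 * Real.pi * I / d) ^ k)⁻¹) ^ x := by
  rw [inv_pow, ← pow_mul, ← exp_nat_mul, ← exp_neg]
  push_cast
  ring_nf

lemma exp_two_pi_I_mul_div_eq_inv_pow (k : ℕ) {d n j : ℕ} (h : n + j = d) :
    exp (2 * Real.pi * I * ((k : ℝ) * (n : ℝ)) / d)
      = ((exp (2 * Real.pi * I / d) ^ k)⁻¹) ^ j := by
  have hroot : (exp (2 * Real.pi * I / d) ^ k)⁻¹ ^ d = 1 := by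
    rw [inv_pow, ← pow_mul, mul_comm k d, pow_mul, ← exp_nat_mul]
    rcases eq_or_ne d 0 with rfl | hd
    · simp
    · rw [mul_div_cancel₀ _ (Nat.cast_ne_zero.mpr hd : (d : ℂ) ≠ 0), exp_two_pi_mul_I, one_pow,
        inv_one]
  rw [← inv_pow_eq_pow_of_add_eq hroot h, ← exp_neg_two_pi_I_mul_div_eq_inv_pow, ← exp_neg]
  push_cast
  ring_nf

lemma Real.cot_pi_sub_s2 (x : ℝ) : Real.cot (Real.pi - x) = -Real.cot x := by
  rw [Real.cot_eq_cos_div_sin, Real.cot_eq_cos_div_sin, Real.cos_pi_sub, Real.sin_pi_sub,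
    neg_div]

lemma cot_pi_mul_add_div_reflect {d N n : ℕ} (hdN : d = 2 * N + 1) (hn : n ≤ 2 * N) (a : ℝ) :
    Real.cot (Real.pi * ((n : ℝ) + 1 - 2 * a + a) / d)
      = -Real.cot (Real.pi * (((2 * N - n : ℕ) : ℝ) + a) / d) := by
  rw [← Real.cot_pi_sub_s2]
  push_cast [Nat.cast_sub hn, hdN]
  field_simp
  ring_nf

lemma Complex.ofReal_cot_eq_exp_ratio (x : ℝ) :
    (Real.cot x : ℂ) = I * (exp (2 * I * x) + 1) / (exp (2 * I * x) - 1) := by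
  rw [ofReal_cot, cot_eq_exp_ratio]
  by_cases h : exp (2 * I * x) = 1
  · simp [h]
  · have h1 : exp (2 * I * x) - 1 ≠ 0 := sub_ne_zero.mpr h
    have h2 : 1 - exp (2 * I * x) ≠ 0 := fun h' => h (by linear_combination -h')
    field_simp
    linear_combination (exp (2 * I * x) ^ 2 - 1) * I_sq

lemma Complex.exp_two_mul_mul_I_sub_one (z : ℂ) :
    exp (2 * z * I) - 1 = 2 * I * sin z * exp (z * I) := by
  rw [sin, show 2 * z * I = z * I + z * I by ring, exp_add]
  have : exp (-z * I) * exp (z * I) = 1 := by rw [← exp_add]; simp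
  linear_combination (exp (z * I) ^ 2 - exp (-z * I) * exp (z * I)) * I_sq + this

lemma sum_range_cot_mul_inv_pow (d k : ℕ) (hk0 : 0 < k) (hkd : k < d) (a : ℝ)
    (ha : Real.sin (Real.pi * a) ≠ 0) :
    ∑ j ∈ range d,
        (Real.cot (Real.pi * (j + a) / d) : ℂ) * ((exp (2 * Real.pi * I / d) ^ k)⁻¹) ^ j
      = d * exp (Real.pi * I * a * (2 * k - d) / d) / Real.sin (Real.pi * a) := by
  have hd : (d : ℂ) ≠ 0 := Nat.cast_ne_zero.mpr (by omega)
  set ω := exp (2 * Real.pi * I / d)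
  set q := exp (2 * Real.pi * I * a / d)
  have hqd : q ^ d - 1 = 2 * I * Real.sin (Real.pi * a) * exp ((Real.pi * a : ℝ) * I) := by
    rw [← exp_nat_mul, ofReal_sin, ← exp_two_mul_mul_I_sub_one]
    congr 2
    push_cast
    field_simp
  have hq : q ^ d ≠ 1 := by
    rw [← sub_ne_zero, hqd]
    exact mul_ne_zero (mul_ne_zero (mul_ne_zero two_ne_zero I_ne_zero) (ofReal_ne_zero.mpr ha))
      (exp_ne_zero _)
  have hqk :
      q ^ k = exp (Real.pi * I * a * (2 * k - d) / d) * exp ((Real.pi * a : ℝ) * I) := by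
    rw [← exp_nat_mul, ← exp_add]
    congr 1
    push_cast
    field_simp
    ring
  have hcot : ∀ j : ℕ, (Real.cot (Real.pi * (j + a) / d) : ℂ)
      = I * (q * ω ^ j + 1) / (q * ω ^ j - 1) := fun j => by
    rw [ofReal_cot_eq_exp_ratio, ← exp_nat_mul, ← exp_add]
    congr 4 <;> (push_cast; field_simp; ring)
  rw [sum_congr rfl fun j _ => by rw [hcot, mul_div_assoc, mul_assoc], ← mul_sum,
    (isPrimitiveRoot_exp d (by omega)).sum_range_add_one_div_sub_one_mul_inv_pow hq hk0 hkd, hqd,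
    hqk]
  have := exp_ne_zero ((Real.pi * a : ℝ) * I)
  field_simp

lemma Real.sin_pi_mul_one_div_two_mul_ne_zero {m : ℕ} (hm : m ≠ 0) :
    Real.sin (Real.pi * (1 / (2 * m))) ≠ 0 := by
  have hm' : (1 : ℝ) < 2 * m := by norm_cast; omega
  rw [mul_one_div]
  exact (Real.sin_pos_of_pos_of_lt_pi (by positivity) (div_lt_self Real.pi_pos hm')).ne'

lemma ofReal_tan_div_mul_div_sin {θ : ℝ} (hθ : Real.sin θ ≠ 0) {d : ℕ} (hd : d ≠ 0) (z : ℂ) :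
    ((1 / (2 * d) * Real.tan θ : ℝ) : ℂ) * (d * z / Real.sin θ) = z / (2 * Real.cos θ) := by
  rw [Real.tan_eq_sin_div_cos]
  by_cases hc : Real.cos θ = 0
  · simp [hc]
  · have : (d : ℂ) ≠ 0 := Nat.cast_ne_zero.mpr hd
    have : (Real.sin θ : ℂ) ≠ 0 := ofReal_ne_zero.mpr hθ
    have : (Real.cos θ : ℂ) ≠ 0 := ofReal_ne_zero.mpr hc
    simp only [ofReal_mul, ofReal_div, ofReal_one, ofReal_ofNat, ofReal_natCast]
    field_simp

theorem stmt2_general (d m : ℕ) (hodd : d % 2 = 1) (hm : 2 ≤ m)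
    (g : ℝ → ℝ) (hg : ∀ x : ℝ, g x = Real.cot (Real.pi * (x + 1 / (2 * m)) / d))
    (α β : ℕ → ℝ)
    (hα : ∀ n : ℕ, α n = 1 / (2 * d) * Real.tan (Real.pi / (2 * m))
      * (g n - g (((d - 1) / 2 : ℕ) : ℝ)))
    (hβ : ∀ n : ℕ, β n = 1 / (2 * d) * Real.tan (Real.pi / (2 * m))
      * (g ((n : ℝ) + 1 - 1 / m) + g (((d - 1) / 2 : ℕ) : ℝ)))
    (k : ℕ) (hk1 : 1 ≤ k) (hk2 : k ≤ (d - 1) / 2) :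
    ∑ n ∈ Finset.range ((d - 1) / 2),
        ((α n : ℂ) * Complex.exp (2 * Real.pi * Complex.I * (-((k : ℝ) * n)) / d)
          - (β n : ℂ) * Complex.exp (2 * Real.pi * Complex.I * ((k : ℝ) * ((n : ℝ) + 1)) / d))
      = Complex.exp (Real.pi * Complex.I * ((2 * (k : ℝ) - d) / (2 * m * d)))
          / (2 * Real.cos (Real.pi / (2 * m))) := by
  set N := (d - 1) / 2
  have hdN : d = 2 * N + 1 := by omega
  have hkd : k < d := by omega
  have hω := isPrimitiveRoot_exp d (by omega)
  set ζ := (exp (2 * Real.pi * I / d) ^ k)⁻¹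
  have hζ : ζ ^ (2 * N + 1) = 1 := by
    rw [← hdN, inv_pow, ← pow_mul, mul_comm k, pow_mul, hω.pow_eq_one, one_pow, inv_one]
  have hsummand : ∀ n ∈ range N,
      (α n : ℂ) * exp (2 * Real.pi * I * (-((k : ℝ) * n)) / d)
        - (β n : ℂ) * exp (2 * Real.pi * I * ((k : ℝ) * ((n : ℝ) + 1)) / d)
      = (1 / (2 * d) * Real.tan (Real.pi / (2 * m)) : ℝ)
        * ((g n - g N) * ζ ^ n + (g (2 * N - n : ℕ) - g N) * ζ ^ (2 * N - n)) := fun n hn => by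
    have hn : n < N := mem_range.mp hn
    have hreflect : g ((n : ℝ) + 1 - 1 / m) = -g ((2 * N - n : ℕ) : ℝ) := by
      rw [hg, hg, ← cot_pi_mul_add_div_reflect hdN (by omega)]
      ring_nf
    rw [exp_neg_two_pi_I_mul_div_eq_inv_pow,
      show ((n : ℝ) : ℂ) + 1 = (((n + 1 : ℕ) : ℝ) : ℂ) by push_cast; rfl,
      exp_two_pi_I_mul_div_eq_inv_pow k (by omega : n + 1 + (2 * N - n) = d), hα, hβ, hreflect]
    push_cast
    ring
  have hζ1 : ζ ≠ 1 := inv_ne_one.mpr (hω.pow_ne_one_of_pos_of_lt (by omega) hkd)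
  have hsin := Real.sin_pi_mul_one_div_two_mul_ne_zero (by omega : m ≠ 0)
  rw [sum_congr rfl hsummand, ← mul_sum,
    sum_range_sub_mul_pow_add_reflect hζ hζ1 (fun j => (g j : ℂ)), ← hdN]
  simp only [hg]
  rw [sum_range_cot_mul_inv_pow d k hk1 hkd _ hsin, ← mul_one_div Real.pi,
    ofReal_tan_div_mul_div_sin hsin (by omega)]
  congr 2
  have : (d : ℂ) ≠ 0 := Nat.cast_ne_zero.mpr (by omega)
  have : (m : ℂ) ≠ 0 := Nat.cast_ne_zero.mpr (by omega)
  push_cast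
  field_simp

theorem stmt2 (d m : ℕ) (hd : 3 ≤ d) (hodd : d % 2 = 1) (hm : 2 ≤ m)
    (g : ℝ → ℝ) (hg : ∀ x : ℝ, g x = Real.cot (Real.pi * (x + 1 / (2 * m)) / d))
    (α β : ℕ → ℝ)
    (hα : ∀ n : ℕ, α n = 1 / (2 * d) * Real.tan (Real.pi / (2 * m))
      * (g n - g (((d - 1) / 2 : ℕ) : ℝ)))
    (hβ : ∀ n : ℕ, β n = 1 / (2 * d) * Real.tan (Real.pi / (2 * m))
      * (g ((n : ℝ) + 1 - 1 / m) + g (((d - 1) / 2 : ℕ) : ℝ)))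
    (k : ℕ) (hk1 : 1 ≤ k) (hk2 : k ≤ (d - 1) / 2) :
    ∑ n ∈ Finset.range ((d - 1) / 2),
        ((α n : ℂ) * Complex.exp (2 * Real.pi * Complex.I * (-((k : ℝ) * n)) / d)
          - (β n : ℂ) * Complex.exp (2 * Real.pi * Complex.I * ((k : ℝ) * ((n : ℝ) + 1)) / d))
      = Complex.exp (Real.pi * Complex.I * ((2 * (k : ℝ) - d) / (2 * m * d)))
          / (2 * Real.cos (Real.pi / (2 * m))) :=
  stmt2_general d m hodd hm g hg α β hα hβ k hk1 hk2
end

section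
/- For every real ξ, the maximum over all local deterministic assignments A_1, A_2, B_1, B_2 ∈ Z_3 of the expression J(ξ) = [A_1=B_1] + [A_2=B_2] + [A_1=B_2-1] + [A_2=B_1] - ξ([A_1=B_1-1] + [A_2=B_2-1] + [A_1=B_2] + [A_2=B_1+1]) (where [·] denotes the 0/1 indicator of an equality modulo 3) equals: -4ξ if ξ ≤ -1; 3-ξ if -1 ≤ ξ ≤ 1; and 2 if ξ ≥ 1. -/
noncomputable def J223 (ξ : ℝ) (A₁ A₂ B₁ B₂ : ZMod 3) : ℝ :=
  (if A₁ = B₁ then 1 else 0) + (if A₂ = B₂ then 1 else 0)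
    + (if A₁ = B₂ - 1 then 1 else 0) + (if A₂ = B₁ then 1 else 0)
    - ξ * ((if A₁ = B₁ - 1 then 1 else 0) + (if A₂ = B₂ - 1 then 1 else 0)
      + (if A₁ = B₂ then 1 else 0) + (if A₂ = B₁ + 1 then 1 else 0))

set_option maxHeartbeats 2000000 in
theorem stmt3 (ξ : ℝ) :
    IsGreatest {x : ℝ | ∃ A₁ A₂ B₁ B₂ : ZMod 3, x = J223 ξ A₁ A₂ B₁ B₂}
      (if ξ ≤ -1 then -4 * ξ else if ξ ≤ 1 then 3 - ξ else 2) := by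
  have tri : ∀ a : ZMod 3, a = 0 ∨ a = 1 ∨ a = 2 := by decide
  constructor
  · split_ifs with h1 h2
    · exact ⟨2, 1, 0, 2, by simp (config := { decide := true }) [J223]; norm_num; ring⟩
    · exact ⟨0, 0, 0, 0, by simp (config := { decide := true }) [J223]; norm_num⟩
    · exact ⟨0, 2, 0, 2, by simp (config := { decide := true }) [J223]; norm_num⟩
  · rintro x ⟨A₁, A₂, B₁, B₂, rfl⟩
    have h4 : (-1 : ℝ) ≤ 1 := by norm_num
    split_ifs with h1 h2 <;>
    · rcases tri A₁ with rfl|rfl|rfl <;> rcases tri A₂ with rfl|rfl|rfl <;>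
        rcases tri B₁ with rfl|rfl|rfl <;> rcases tri B₂ with rfl|rfl|rfl <;>
        simp (config := { decide := true }) only [J223] <;> norm_num <;> linarith
end

section
/- Define 𝒥(ξ,γ) = (4/3)·(3 + γ(2√3 + γ - ξγ))/(2 + γ²) for real γ > 0 and real ξ. Then for fixed ξ > -1, the function γ ↦ 𝒥(ξ,γ) attains its maximum over γ > 0 at γ₊(ξ) = (√(4ξ² + 4ξ + 25) - 2ξ - 1)/(2√3), and the maximum value equals (1/3)[5 - 2ξ + √(25 + 4(ξ+1)ξ)]. -/
theorem stmt4 (ξ : ℝ) (hξ : -1 < ξ)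
    (𝒥 : ℝ → ℝ)
    (h𝒥 : ∀ γ : ℝ, 𝒥 γ = 4 / 3 * (3 + γ * (2 * Real.sqrt 3 + γ - ξ * γ)) / (2 + γ ^ 2))
    (γp : ℝ)
    (hγp : γp = (Real.sqrt (4 * ξ ^ 2 + 4 * ξ + 25) - 2 * ξ - 1) / (2 * Real.sqrt 3)) :
    0 < γp ∧ (∀ γ : ℝ, 0 < γ → 𝒥 γ ≤ 𝒥 γp) ∧
      𝒥 γp = 1 / 3 * (5 - 2 * ξ + Real.sqrt (25 + 4 * (ξ + 1) * ξ)) := by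
  have htpos : (0:ℝ) < Real.sqrt 3 := Real.sqrt_pos.mpr (by norm_num)
  have ht : Real.sqrt 3 ^ 2 = 3 := Real.sq_sqrt (by norm_num)
  set t := Real.sqrt 3 with htdef
  have hDpos : (0:ℝ) < 4 * ξ ^ 2 + 4 * ξ + 25 := by nlinarith [sq_nonneg (2*ξ+1)]
  have hs0 : 0 ≤ Real.sqrt (4 * ξ ^ 2 + 4 * ξ + 25) := Real.sqrt_nonneg _
  have hs2 : Real.sqrt (4 * ξ ^ 2 + 4 * ξ + 25) ^ 2 = 4 * ξ ^ 2 + 4 * ξ + 25 :=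
    Real.sq_sqrt hDpos.le
  set s := Real.sqrt (4 * ξ ^ 2 + 4 * ξ + 25) with hsdef
  have hsgt : 2 * ξ + 1 < s := by nlinarith
  have hsneg : -(2 * ξ + 1) < s := by nlinarith
  have hγpos : 0 < γp := by
    rw [hγp]
    apply div_pos (by linarith) (by linarith)
  have hC : 2 * t * γp = s - 2 * ξ - 1 := by
    rw [hγp]; field_simp
  have hs' : Real.sqrt (25 + 4 * (ξ + 1) * ξ) = s := by
    rw [hsdef]; congr 1; ring
  have hdγ : (0:ℝ) < 2 + γp ^ 2 := by positivity
  have hM : 𝒥 γp = 1 / 3 * (5 - 2 * ξ + s) := by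
    rw [h𝒥 γp, div_eq_iff (ne_of_gt hdγ)]
    have key : t * (4 / 3 * (3 + γp * (2 * t + γp - ξ * γp))) =
        t * (1 / 3 * (5 - 2 * ξ + s) * (2 + γp ^ 2)) := by
      linear_combination (4 * γp / 3) * ht - (γp / 6) * hs2 +
        (t * (2 + γp ^ 2) / 3 - (γp / 6) * (2 * t * γp + 2 * ξ + 1 + s)) * hC
    exact mul_left_cancel₀ (ne_of_gt htpos) key
  refine ⟨hγpos, ?_, by rw [hM, hs']⟩
  intro γ hγ
  rw [hM, h𝒥 γ, div_le_iff₀ (by positivity)]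
  nlinarith [sq_nonneg ((s + 2 * ξ + 1) * γ - 4 * t), hs2, ht, hsneg, hsgt, sq_nonneg γ,
    mul_pos hγ htpos]
end

section
/- Let m ≥ 2 and consider the chained Bell expression Ĩ = Σ_{α=1}^{m} [⟨𝒜_α ℬ_α⟩ + ⟨𝒜_{α+1} ℬ_α⟩] with the convention 𝒜_{m+1} = -𝒜_1, where the classical model assigns each 𝒜_α, ℬ_α a value in {-1, +1} and ⟨XY⟩ is the product of the assigned values. Then the maximum of Ĩ over all deterministic assignments is 2(m-1). -/
theorem stmt13 (m : ℕ) (hm : 2 ≤ m) :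
    IsGreatest {x : ℤ | ∃ A B : ℕ → ℤ,
        (∀ α, A α = 1 ∨ A α = -1) ∧ (∀ α, B α = 1 ∨ B α = -1) ∧
        x = ∑ α ∈ Finset.range m,
          (A α * B α + (if α + 1 = m then -A 0 else A (α + 1)) * B α)}
      (2 * ((m : ℤ) - 1)) := by
  constructor
  · refine ⟨fun _ => 1, fun _ => 1, fun _ => Or.inl rfl, fun _ => Or.inl rfl, ?_⟩
    have h : ∀ α ∈ Finset.range m, (1 : ℤ) * 1 + (if α + 1 = m then -(1:ℤ) else 1) * 1
        = 2 - (if α = m - 1 then 2 else 0) := by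
      intro α hα
      have h1 : α + 1 = m ↔ α = m - 1 := by omega
      rcases em (α = m - 1) with h | h <;> simp [h1, h, show m - 1 + 1 = m by omega]
    rw [Finset.sum_congr rfl h, Finset.sum_sub_distrib, Finset.sum_const,
      Finset.sum_ite_eq' (Finset.range m) (m-1) (fun _ => (2:ℤ))]
    have hmem : m - 1 ∈ Finset.range m := by simp; omega
    simp only [hmem, if_true, Finset.card_range, nsmul_eq_mul]
    ring
  · rintro x ⟨A, B, hA, hB, rfl⟩
    set A' : ℕ → ℤ := fun β => if β = m then -A 0 else A β with hA'
    have hA'v : ∀ β, A' β = 1 ∨ A' β = -1 := by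
      intro β; simp only [hA']
      split
      · rcases hA 0 with h | h <;> simp [h]
      · exact hA β
    have key : ∀ α, A α * B α + (if α + 1 = m then -A 0 else A (α+1)) * B α
        ≤ 2 - |A α - A' (α+1)| := by
      intro α
      have h1 : (if α + 1 = m then -A 0 else A (α+1)) = A' (α+1) := rfl
      rw [h1]
      rcases hA α with h2 | h2 <;> rcases hA'v (α+1) with h3 | h3 <;>
        rcases hB α with h4 | h4 <;> rw [h2, h3, h4] <;> norm_num
    calc ∑ α ∈ Finset.range m, (A α * B α + (if α + 1 = m then -A 0 else A (α + 1)) * B α)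
        ≤ ∑ α ∈ Finset.range m, (2 - |A α - A' (α+1)|) :=
          Finset.sum_le_sum fun α _ => key α
      _ = 2 * m - ∑ α ∈ Finset.range m, |A α - A' (α+1)| := by
          rw [Finset.sum_sub_distrib, Finset.sum_const, Finset.card_range]; push_cast; ring
      _ ≤ 2 * m - |∑ α ∈ Finset.range m, (A α - A' (α+1))| := by
          have := Finset.abs_sum_le_sum_abs (fun α => A α - A' (α+1)) (Finset.range m)
          linarith
      _ = 2 * m - 2 := by
          have h1 : ∀ α ∈ Finset.range m, A α - A' (α+1) = A' α - A' (α+1) := by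
            intro α hα
            have hne : α ≠ m := by simp at hα; omega
            simp [hA', hne]
          rw [Finset.sum_congr rfl h1, Finset.sum_range_sub']
          have hm0 : A' 0 = A 0 := if_neg (by omega)
          have hmm : A' m = -A 0 := by simp [hA']
          rw [hm0, hmm]
          rcases hA 0 with h | h <;> rw [h] <;> norm_num
      _ = 2 * ((m:ℤ) - 1) := by ring
end
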